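/- arXiv:1511.06324 — 8 statements merged into one kernel-verified Lean document; each statement's English description precedes it below -/
import Mathlib

section
/- For the problem min_{x,y∈ℝ} x² − y² subject to x = y, x ∈ [−1,1], with augmented Lagrangian L_β(x,y,w) = x² − y² + w(x−y) + β(x−y)², and any β > 1, the dual function ψ(w) = inf_{x∈[−1,1], y∈ℝ} L_β(x,y,w) equals −max{(w−2)², (w+2)²}/(4(β−1)). -/
open Set

lemma key_bound (w x : ℝ) (h1 : -1 ≤ x) (h2 : x ≤ 1) :
    (w + 2 * x) ^ 2 ≤ max ((w - 2) ^ 2) ((w + 2) ^ 2) := by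
  rcases le_total 0 w with hw | hw
  · refine le_trans ?_ (le_max_right _ _)
    nlinarith [mul_nonneg hw (by linarith : (0:ℝ) ≤ 1 - x),
      mul_nonneg (by linarith : (0:ℝ) ≤ 1 - x) (by linarith : (0:ℝ) ≤ 1 + x)]
  · refine le_trans ?_ (le_max_left _ _)
    nlinarith [mul_nonneg (by linarith : (0:ℝ) ≤ -w) (by linarith : (0:ℝ) ≤ 1 + x),
      mul_nonneg (by linarith : (0:ℝ) ≤ 1 - x) (by linarith : (0:ℝ) ≤ 1 + x)]

/-- For the problem min x² − y² s.t. x = y, x ∈ [−1,1], with augmented Lagrangian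
L_β(x,y,w) = x² − y² + w(x−y) + β(x−y)², and β > 1, the dual function equals
−max{(w−2)², (w+2)²}/(4(β−1)). -/
theorem stmt0 (β : ℝ) (hβ : 1 < β)
    (L : ℝ → ℝ → ℝ → ℝ)
    (hL : ∀ x y w, L x y w = x ^ 2 - y ^ 2 + w * (x - y) + β * (x - y) ^ 2)
    (w : ℝ) :
    sInf {v : ℝ | ∃ x y : ℝ, x ∈ Set.Icc (-1 : ℝ) 1 ∧ v = L x y w}
      = -(max ((w - 2) ^ 2) ((w + 2) ^ 2)) / (4 * (β - 1)) := by
  have hb : (0:ℝ) < β - 1 := by linarith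
  have hb4 : (0:ℝ) < 4 * (β - 1) := by linarith
  have hne : (β : ℝ) - 1 ≠ 0 := ne_of_gt hb
  set M := max ((w - 2) ^ 2) ((w + 2) ^ 2) with hM
  have hlb : ∀ v ∈ {v : ℝ | ∃ x y : ℝ, x ∈ Set.Icc (-1 : ℝ) 1 ∧ v = L x y w},
      -M / (4 * (β - 1)) ≤ v := by
    rintro v ⟨x, y, ⟨hx1, hx2⟩, rfl⟩
    rw [hL, div_le_iff₀ hb4]
    have hkey := key_bound w x hx1 hx2
    nlinarith [sq_nonneg (2 * (β - 1) * (x - y) + (w + 2 * x))]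
  apply le_antisymm
  · apply csInf_le ⟨_, hlb⟩
    rcases le_total 0 w with hw | hw
    · have hMe : M = (w + 2) ^ 2 := max_eq_right (by nlinarith)
      refine ⟨1, 1 + (w + 2) / (2 * (β - 1)), ⟨by norm_num, le_refl 1⟩, ?_⟩
      rw [hL, hMe]
      field_simp
      ring
    · have hMe : M = (w - 2) ^ 2 := max_eq_left (by nlinarith)
      refine ⟨-1, -1 + (w - 2) / (2 * (β - 1)), ⟨le_refl _, by norm_num⟩, ?_⟩
      rw [hL, hMe]
      field_simp
      ring
  · exact le_csInf ⟨L 0 0 w, 0, 0, ⟨by norm_num, by norm_num⟩, rfl⟩ hlb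
end

section
/- For the problem min_{x,y∈ℝ} x² − y² subject to x = y, x ∈ [−1,1], with β > 1, the duality gap is nonzero: inf_{x∈[−1,1],y} sup_w L_β(x,y,w) = 0 while sup_w inf_{x∈[−1,1],y} L_β(x,y,w) = −1/(β−1). -/
open Set

/-- Nonzero duality gap for min x² − y² s.t. x = y, x ∈ [−1,1], with β > 1:
inf sup L_β = 0 while sup inf L_β = −1/(β−1). -/
theorem stmt1 (β : ℝ) (hβ : 1 < β)
    (L : ℝ → ℝ → ℝ → ℝ)
    (hL : ∀ x y w, L x y w = x ^ 2 - y ^ 2 + w * (x - y) + β * (x - y) ^ 2) :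
    (⨅ x ∈ Set.Icc (-1 : ℝ) 1, ⨅ y : ℝ, ⨆ w : ℝ, ((L x y w : ℝ) : EReal)) = (0 : EReal)
    ∧ (⨆ w : ℝ, ⨅ x ∈ Set.Icc (-1 : ℝ) 1, ⨅ y : ℝ, ((L x y w : ℝ) : EReal))
        = ((-1 / (β - 1) : ℝ) : EReal) := by
  have hb : (0:ℝ) < β - 1 := by linarith
  constructor
  · have hA : ∀ x : ℝ, (⨅ y : ℝ, ⨆ w : ℝ, ((L x y w : ℝ) : EReal)) = 0 := by
      intro x
      apply le_antisymm
      · refine iInf_le_of_le x ?_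
        apply iSup_le
        intro w
        have h0 : L x x w = 0 := by rw [hL]; ring
        simp [h0]
      · apply le_iInf; intro y
        by_cases h : x = y
        · refine le_iSup_of_le 0 ?_
          have h0 : L x y 0 = 0 := by rw [hL, h]; ring
          simp [h0]
        · refine le_iSup_of_le ((y^2 - x^2 - β*(x-y)^2)/(x-y)) ?_
          have hxy : x - y ≠ 0 := sub_ne_zero.mpr h
          have h0 : L x y ((y^2 - x^2 - β*(x-y)^2)/(x-y)) = 0 := by
            rw [hL]; field_simp; ring
          simp [h0]
    apply le_antisymm
    · exact iInf₂_le_of_le 0 (by norm_num) (hA 0).le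
    · exact le_iInf₂ fun x hx => (hA x).ge
  · apply le_antisymm
    · apply iSup_le; intro w
      set x₀ : ℝ := if 0 ≤ w then 1 else -1 with hx₀
      have hx₀mem : x₀ ∈ Set.Icc (-1:ℝ) 1 := by
        rw [hx₀]; split <;> norm_num
      have hc : 4 ≤ (2*x₀ + w)^2 := by
        rw [hx₀]; split
        · nlinarith [sq_nonneg w]
        · nlinarith [sq_nonneg w]
      refine iInf₂_le_of_le x₀ hx₀mem ?_
      refine iInf_le_of_le (x₀ + (2*x₀+w)/(2*(β-1))) ?_
      rw [hL]
      have hreal : x₀ ^ 2 - (x₀ + (2*x₀+w)/(2*(β-1))) ^ 2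
          + w * (x₀ - (x₀ + (2*x₀+w)/(2*(β-1))))
          + β * (x₀ - (x₀ + (2*x₀+w)/(2*(β-1)))) ^ 2 ≤ -1 / (β - 1) := by
        have hkey : x₀ ^ 2 - (x₀ + (2*x₀+w)/(2*(β-1))) ^ 2
            + w * (x₀ - (x₀ + (2*x₀+w)/(2*(β-1))))
            + β * (x₀ - (x₀ + (2*x₀+w)/(2*(β-1)))) ^ 2
            = -((2*x₀+w)^2) / (4*(β-1)) := by
          field_simp; ring
        rw [hkey, div_le_div_iff₀ (by positivity) hb]
        nlinarith [hc]
      exact_mod_cast hreal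
    · refine le_iSup_of_le 0 ?_
      refine le_iInf₂ fun x hx => le_iInf fun y => ?_
      rw [hL]
      have hreal : -1 / (β - 1) ≤ x ^ 2 - y ^ 2 + 0 * (x - y) + β * (x - y) ^ 2 := by
        rw [div_le_iff₀ hb]
        nlinarith [sq_nonneg ((β-1)*(x-y)+x), hx.1, hx.2]
      exact_mod_cast hreal
end

section
/- For the problem min_{x,y} x² − y² subject to x = y, x ∈ [−1,1], the ADMM iteration with fixed β > 2 reduces to x^{k+1} = max(−1, min(1, y^k)) and y^{k+1} = (β x^{k+1} − y^k)/(β − 1), and for any initial y^0 the sequence (x^k, y^k) converges. -/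
open Filter

/-- For min x² − y² s.t. x = y, x ∈ [−1,1], the ADMM iteration with fixed β > 2
reduces to x^{k+1} = max(−1, min(1, y^k)), y^{k+1} = (β x^{k+1} − y^k)/(β−1),
and for any initial y⁰ the sequence (x^k, y^k) converges. -/
theorem stmt2 (β : ℝ) (hβ : 2 < β) (x y : ℕ → ℝ)
    (hx : ∀ k, x (k + 1) = max (-1) (min 1 (y k)))
    (hy : ∀ k, y (k + 1) = (β * x (k + 1) - y k) / (β - 1)) :
    ∃ p : ℝ × ℝ, Tendsto (fun k => (x k, y k)) atTop (nhds p) := by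
  have hb1 : (0:ℝ) < β - 1 := by linarith
  -- If |y k| ≤ 1 then y (k+1) = y k
  have hfix : ∀ k, |y k| ≤ 1 → y (k + 1) = y k := by
    intro k hk
    rw [abs_le] at hk
    have hxk : x (k + 1) = y k := by
      rw [hx k, min_eq_right hk.2, max_eq_right hk.1]
    rw [hy k, hxk]
    field_simp
  -- If |y k| > 1 and |y (k+1)| > 1 then |y (k+1)| + 2 ≤ |y k|
  have hdec : ∀ k, 1 < |y k| → 1 < |y (k + 1)| → |y (k + 1)| + 2 ≤ |y k| := by
    intro k hk hk1
    have hyk1 : y (k + 1) * (β - 1) = β * x (k + 1) - y k := by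
      rw [hy k]; field_simp
    rcases lt_abs.mp hk with h | h
    · -- y k > 1
      have hxk : x (k + 1) = 1 := by
        rw [hx k, min_eq_left h.le, max_eq_right (by norm_num : (-1:ℝ) ≤ 1)]
      rw [hxk, mul_one] at hyk1
      have hlt : y (k + 1) < 1 := by nlinarith
      have hneg : y (k + 1) < -1 := by
        rcases lt_abs.mp hk1 with h1 | h1
        · linarith
        · linarith
      rw [abs_of_neg (by linarith : y (k+1) < 0), abs_of_pos (by linarith : (0:ℝ) < y k)]
      nlinarith
    · -- y k < -1
      have hyneg : y k < -1 := by linarith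
      have hxk : x (k + 1) = -1 := by
        rw [hx k, min_eq_right (by linarith : y k ≤ 1), max_eq_left (by linarith : y k ≤ -1)]
      rw [hxk] at hyk1
      have hgt : -1 < y (k + 1) := by nlinarith
      have hpos : 1 < y (k + 1) := by
        rcases lt_abs.mp hk1 with h1 | h1
        · linarith
        · linarith
      rw [abs_of_pos (by linarith : (0:ℝ) < y (k+1)), abs_of_neg (by linarith : y k < 0)]
      nlinarith
  -- There exists N with |y N| ≤ 1
  have hex : ∃ N, |y N| ≤ 1 := by
    by_contra hc
    push_neg at hc
    have hind : ∀ k, |y k| + 2 * k ≤ |y 0| := by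
      intro k
      induction k with
      | zero => simp
      | succ n ih =>
          have := hdec n (hc n) (hc (n + 1))
          push_cast
          push_cast at ih
          linarith
    obtain ⟨k, hk⟩ := exists_nat_gt ((|y 0| - 1) / 2)
    have h1 := hc k
    have h2 := hind k
    have : (|y 0| - 1) / 2 < (k:ℝ) := hk
    linarith
  obtain ⟨N, hN⟩ := hex
  -- y is constant from N on
  have hconst : ∀ m, y (N + m) = y N ∧ |y (N + m)| ≤ 1 := by
    intro m
    induction m with
    | zero => exact ⟨rfl, hN⟩
    | succ n ih =>
        have h1 : y (N + n + 1) = y (N + n) := hfix _ ih.2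
        have : N + (n + 1) = N + n + 1 := rfl
        rw [this, h1]
        exact ih
  -- from N+1 on, x k = y N and y k = y N
  refine ⟨(y N, y N), Tendsto.congr' ?_ tendsto_const_nhds⟩
  rw [EventuallyEq, eventually_atTop]
  refine ⟨N + 1, fun k hk => ?_⟩
  obtain ⟨m, rfl⟩ := Nat.exists_eq_add_of_le hk
  have hym : y (N + 1 + m) = y N := by
    have := (hconst (1 + m)).1
    rwa [← Nat.add_assoc] at this
  have hyNm : y (N + m) = y N := (hconst m).1
  have hxm : x (N + 1 + m) = y N := by
    have : N + 1 + m = (N + m) + 1 := by ring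
    rw [this, hx (N + m), hyNm]
    rw [abs_le] at hN
    rw [min_eq_right hN.2, max_eq_right hN.1]
  rw [Prod.mk.injEq]
  exact ⟨hxm.symm, hym.symm⟩
end

section
/- For q ∈ (0,1), the function f(x) = |x|^q on ℝ is restricted prox-regular: for every M > 0 and bounded set T ⊆ ℝ there exists γ > 0 such that f(y) + (γ/2)(x−y)² ≥ f(x) + d(y−x) for all x ∈ T \ S_M, y ∈ T, and all d ∈ ∂f(x) with |d| ≤ M, where S_M = {x ∈ dom f : |d| > M for all d ∈ ∂f(x)}. -/
/-- General subdifferential of x ↦ |x|^q (0 < q < 1):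
{q·sign(x)|x|^{q−1}} for x ≠ 0, and all of ℝ at 0. -/
noncomputable def subgradAbsPow (q x : ℝ) : Set ℝ :=
  if x = 0 then Set.univ else {q * Real.sign x * |x| ^ (q - 1)}

/-- The exclusion set S_M = {x : |d| > M for all d ∈ ∂f(x)}. -/
noncomputable def exclSet (q M : ℝ) : Set ℝ :=
  {x | ∀ d ∈ subgradAbsPow q x, M < |d|}

/-- Bernoulli for exponent in [-1,0]. -/
lemma neg_bernoulli {s p : ℝ} (hs : -1 < s) (hp0 : -1 ≤ p) (hp1 : p ≤ 0) :
    1 + p * s ≤ (1 + s) ^ p := by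
  have hs1 : 0 < 1 + s := by linarith
  rcases le_or_gt (1 + p * s) 0 with h | h
  · exact h.trans (Real.rpow_pos_of_pos hs1 p).le
  · have hb : (1 + s) ^ (-p) ≤ 1 + (-p) * s :=
      rpow_one_add_le_one_add_mul_self hs.le (by linarith) (by linarith)
    have hpos : 0 < (1 + s) ^ (-p) := Real.rpow_pos_of_pos hs1 _
    have key : (1 + p * s) * (1 + s) ^ (-p) ≤ 1 := by
      calc (1 + p * s) * (1 + s) ^ (-p) ≤ (1 + p * s) * (1 + (-p) * s) :=
            mul_le_mul_of_nonneg_left hb h.le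
        _ = 1 - (p * s) ^ 2 := by ring
        _ ≤ 1 := by nlinarith [sq_nonneg (p * s)]
    have he : (1 + s) ^ p = ((1 + s) ^ (-p))⁻¹ := by
      rw [← Real.rpow_neg hs1.le, neg_neg]
    rw [he, ← one_div, le_div_iff₀ hpos]
    exact key

/-- Tangent line inequality for the concave function `t ↦ t^q`, `0 < q < 1`. -/
lemma tangent_le {q : ℝ} (hq0 : 0 < q) (hq1 : q < 1) {b : ℝ} (hb : 0 < b) {a : ℝ} (ha : 0 ≤ a) :
    a ^ q ≤ b ^ q + q * b ^ (q - 1) * (a - b) := by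
  have hdiv : 0 ≤ a / b := div_nonneg ha hb.le
  have hs : -1 ≤ a / b - 1 := by linarith
  have hber := rpow_one_add_le_one_add_mul_self hs hq0.le hq1.le
  have h1 : 1 + (a / b - 1) = a / b := by ring
  rw [h1] at hber
  have h2 : (a / b) ^ q = a ^ q / b ^ q := Real.div_rpow ha hb.le q
  have hbq : 0 < b ^ q := Real.rpow_pos_of_pos hb q
  have h3 : b ^ (q - 1) = b ^ q / b := by rw [Real.rpow_sub hb, Real.rpow_one]
  rw [h2] at hber
  have hmul := mul_le_mul_of_nonneg_right hber hbq.le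
  have e1 : a ^ q / b ^ q * b ^ q = a ^ q := by field_simp
  have e2 : (1 + q * (a / b - 1)) * b ^ q = b ^ q + q * (b ^ q / b) * (a - b) := by
    field_simp
  rw [e1, e2, ← h3] at hmul
  exact hmul

/-- Tangent line inequality for the convex function `t ↦ t^p`, `-1 ≤ p ≤ 0`. -/
lemma tangent_ge {p : ℝ} (hp0 : -1 ≤ p) (hp1 : p ≤ 0) {b : ℝ} (hb : 0 < b) {a : ℝ} (ha : 0 < a) :
    b ^ p + p * b ^ (p - 1) * (a - b) ≤ a ^ p := by
  have hdiv : 0 < a / b := div_pos ha hb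
  have hs : -1 < a / b - 1 := by linarith
  have hber := neg_bernoulli hs hp0 hp1
  have h1 : 1 + (a / b - 1) = a / b := by ring
  rw [h1] at hber
  have h2 : (a / b) ^ p = a ^ p / b ^ p := Real.div_rpow ha.le hb.le p
  have hbp : 0 < b ^ p := Real.rpow_pos_of_pos hb p
  have h3 : b ^ (p - 1) = b ^ p / b := by rw [Real.rpow_sub hb, Real.rpow_one]
  rw [h2] at hber
  have hmul := mul_le_mul_of_nonneg_right hber hbp.le
  have e1 : a ^ p / b ^ p * b ^ p = a ^ p := by field_simp
  have e2 : (1 + p * (a / b - 1)) * b ^ p = b ^ p + p * (b ^ p / b) * (a - b) := by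
    field_simp
  rw [e1, e2, ← h3] at hmul
  exact hmul

set_option maxHeartbeats 1000000 in
/-- Key estimate at a positive point `a`. -/
lemma key_ineq {q : ℝ} (hq0 : 0 < q) (hq1 : q < 1) {a : ℝ} (ha : 0 < a) (y : ℝ) :
    a ^ q + q * a ^ (q - 1) * (y - a) ≤ |y| ^ q + 3 * (a / 2) ^ (q - 2) / 2 * (a - y) ^ 2 := by
  have ha2 : 0 < a / 2 := by linarith
  set C : ℝ := (a / 2) ^ (q - 2) with hCdef
  have hC : 0 < C := Real.rpow_pos_of_pos ha2 _
  have hCsq : C * (a / 2) ^ 2 = (a / 2) ^ q := by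
    rw [hCdef, ← Real.rpow_natCast (a / 2) 2, ← Real.rpow_add ha2]
    norm_num
  rcases le_or_gt y 0 with hy | hy
  · -- y ≤ 0
    have h1 : 0 ≤ |y| ^ q := Real.rpow_nonneg (abs_nonneg y) q
    have haq1 : 0 < a ^ (q - 1) := Real.rpow_pos_of_pos ha _
    have haa : a ^ (q - 1) * a = a ^ q := by
      rw [Real.rpow_sub ha, Real.rpow_one]; field_simp
    have h2 : q * a ^ (q - 1) * (y - a) ≤ q * (-(a ^ q)) := by
      have t1 : a ^ (q - 1) * (y - a) ≤ a ^ (q - 1) * (-a) :=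
        mul_le_mul_of_nonneg_left (by linarith) haq1.le
      have t2 : a ^ (q - 1) * (-a) = -(a ^ q) := by rw [← haa]; ring
      calc q * a ^ (q - 1) * (y - a) = q * (a ^ (q - 1) * (y - a)) := by ring
        _ ≤ q * (a ^ (q - 1) * (-a)) := mul_le_mul_of_nonneg_left t1 hq0.le
        _ = q * (-(a ^ q)) := by rw [t2]
    have h3 : a ^ 2 ≤ (a - y) ^ 2 := by nlinarith
    have h4 : a ^ q ≤ 2 * (a / 2) ^ q := by
      have e : (a / 2) ^ q = a ^ q / 2 ^ q := Real.div_rpow ha.le (by norm_num) q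
      have h2q : (2 : ℝ) ^ q ≤ 2 ^ (1 : ℝ) :=
        Real.rpow_le_rpow_of_exponent_le (by norm_num) hq1.le
      rw [Real.rpow_one] at h2q
      have h2qpos : (0 : ℝ) < 2 ^ q := Real.rpow_pos_of_pos (by norm_num) q
      have haqpos : 0 < a ^ q := Real.rpow_pos_of_pos ha q
      have := div_le_div_of_nonneg_left haqpos.le h2qpos h2q
      rw [e]; linarith
    have h5 : 3 * C / 2 * a ^ 2 = 6 * (a / 2) ^ q := by rw [← hCsq]; ring
    have h6 : 3 * C / 2 * a ^ 2 ≤ 3 * C / 2 * (a - y) ^ 2 :=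
      mul_le_mul_of_nonneg_left h3 (by positivity)
    have haqpos : 0 < a ^ q := Real.rpow_pos_of_pos ha q
    have haq2 : 0 < (a / 2) ^ q := Real.rpow_pos_of_pos ha2 q
    have hqaq : 0 ≤ q * a ^ q := by positivity
    have hqaq' : q * (-(a ^ q)) ≤ 0 := by nlinarith
    linarith
  · -- 0 < y
    rw [abs_of_pos hy]
    rcases le_or_gt (a / 2) y with hy2 | hy2
    · -- a/2 ≤ y : smooth region
      have ht := tangent_le hq0 hq1 hy ha.le
      have hp0 : (-1 : ℝ) ≤ q - 1 := by linarith
      have hp1 : q - 1 ≤ 0 := by linarith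
      have hq32 : q * (1 - q) ≤ 3 / 2 := by nlinarith [sq_nonneg (q - 1 / 2)]
      have eexp : q - 1 - 1 = q - 2 := by ring
      rcases le_or_gt y a with hya | hya
      · -- y ≤ a, use tangent_ge at y
        have hg := tangent_ge hp0 hp1 hy (a := a) ha
        rw [eexp] at hg
        have hyC : y ^ (q - 2) ≤ C :=
          Real.rpow_le_rpow_of_nonpos ha2 hy2 (by linarith)
        have hd : y ^ (q - 1) - a ^ (q - 1) ≤ (1 - q) * y ^ (q - 2) * (a - y) := by
          linarith
        have hane : 0 ≤ a - y := by linarith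
        have hcy : 0 ≤ C * (a - y) ^ 2 := by positivity
        have hstep : q * (a - y) * (y ^ (q - 1) - a ^ (q - 1))
            ≤ q * (1 - q) * C * (a - y) ^ 2 := by
          have t1 : q * (a - y) * (y ^ (q - 1) - a ^ (q - 1))
              ≤ q * (a - y) * ((1 - q) * y ^ (q - 2) * (a - y)) :=
            mul_le_mul_of_nonneg_left hd (mul_nonneg hq0.le hane)
          have t2 : q * (a - y) * ((1 - q) * y ^ (q - 2) * (a - y))
              ≤ q * (1 - q) * C * (a - y) ^ 2 := by
            have t3 : y ^ (q - 2) * (q * (1 - q) * (a - y) ^ 2)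
                ≤ C * (q * (1 - q) * (a - y) ^ 2) :=
              mul_le_mul_of_nonneg_right hyC
                (mul_nonneg (mul_nonneg hq0.le (by linarith)) (sq_nonneg _))
            nlinarith [t3]
          linarith
        have hfin : q * (1 - q) * C * (a - y) ^ 2 ≤ 3 * C / 2 * (a - y) ^ 2 := by
          have := mul_le_mul_of_nonneg_right hq32 hcy
          nlinarith [this]
        nlinarith [ht, hstep, hfin]
      · -- a < y, use tangent_ge at a
        have hg := tangent_ge hp0 hp1 ha (a := y) hy
        rw [eexp] at hg
        have haC : a ^ (q - 2) ≤ C :=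
          Real.rpow_le_rpow_of_nonpos ha2 (by linarith) (by linarith)
        have hd : a ^ (q - 1) - y ^ (q - 1) ≤ (1 - q) * a ^ (q - 2) * (y - a) := by
          linarith
        have hane : 0 ≤ y - a := by linarith
        have hcy : 0 ≤ C * (y - a) ^ 2 := by positivity
        have hstep : q * (y - a) * (a ^ (q - 1) - y ^ (q - 1))
            ≤ q * (1 - q) * C * (y - a) ^ 2 := by
          have t1 : q * (y - a) * (a ^ (q - 1) - y ^ (q - 1))
              ≤ q * (y - a) * ((1 - q) * a ^ (q - 2) * (y - a)) :=
            mul_le_mul_of_nonneg_left hd (mul_nonneg hq0.le hane)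
          have t2 : q * (y - a) * ((1 - q) * a ^ (q - 2) * (y - a))
              ≤ q * (1 - q) * C * (y - a) ^ 2 := by
            have t3 : a ^ (q - 2) * (q * (1 - q) * (y - a) ^ 2)
                ≤ C * (q * (1 - q) * (y - a) ^ 2) :=
              mul_le_mul_of_nonneg_right haC
                (mul_nonneg (mul_nonneg hq0.le (by linarith)) (sq_nonneg _))
            nlinarith [t3]
          linarith
        have hfin : q * (1 - q) * C * (y - a) ^ 2 ≤ 3 * C / 2 * (a - y) ^ 2 := by
          have := mul_le_mul_of_nonneg_right hq32 hcy
          nlinarith [this]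
        nlinarith [ht, hstep, hfin]
    · -- 0 < y < a/2 : far region
      have hs : a / 2 < a - y := by linarith
      have hs0 : 0 < a - y := by linarith
      have es : (a - y) ^ (q - 1) * (a - y) = (a - y) ^ q := by
        rw [Real.rpow_sub hs0, Real.rpow_one]; field_simp
      have ey : y ^ (q - 1) * y = y ^ q := by
        rw [Real.rpow_sub hy, Real.rpow_one]; field_simp
      have ea : a ^ (q - 1) * a = a ^ q := by
        rw [Real.rpow_sub ha, Real.rpow_one]; field_simp
      have h1 : a ^ (q - 1) ≤ (a - y) ^ (q - 1) :=
        Real.rpow_le_rpow_of_nonpos hs0 (by linarith) (by linarith)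
      have h2 : a ^ (q - 1) ≤ y ^ (q - 1) :=
        Real.rpow_le_rpow_of_nonpos hy (by linarith) (by linarith)
      have m1 : a ^ (q - 1) * (a - y) ≤ (a - y) ^ q := by
        calc a ^ (q - 1) * (a - y) ≤ (a - y) ^ (q - 1) * (a - y) :=
              mul_le_mul_of_nonneg_right h1 hs0.le
          _ = (a - y) ^ q := es
      have m2 : a ^ (q - 1) * y ≤ y ^ q := by
        calc a ^ (q - 1) * y ≤ y ^ (q - 1) * y := mul_le_mul_of_nonneg_right h2 hy.le
          _ = y ^ q := ey
      have m3 : a ^ (q - 1) * (a - y) + a ^ (q - 1) * y = a ^ q := by rw [← ea]; ring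
      have hsub : a ^ q ≤ (a - y) ^ q + y ^ q := by linarith
      have hsC : (a - y) ^ (q - 2) ≤ C :=
        Real.rpow_le_rpow_of_nonpos ha2 hs.le (by linarith)
      have hssq : (a - y) ^ (q - 2) * (a - y) ^ 2 = (a - y) ^ q := by
        rw [← Real.rpow_natCast (a - y) 2, ← Real.rpow_add hs0]
        norm_num
      have hneg : q * a ^ (q - 1) * (y - a) ≤ 0 := by
        have hp : 0 < a ^ (q - 1) := Real.rpow_pos_of_pos ha _
        have : 0 ≤ q * a ^ (q - 1) * (a - y) := by positivity
        nlinarith [this]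
      have hsq2 : (a - y) ^ q ≤ 3 * C / 2 * (a - y) ^ 2 := by
        have t1 : (a - y) ^ (q - 2) * (a - y) ^ 2 ≤ C * (a - y) ^ 2 :=
          mul_le_mul_of_nonneg_right hsC (sq_nonneg _)
        rw [hssq] at t1
        nlinarith [mul_nonneg hC.le (sq_nonneg (a - y))]
      have hyq : 0 ≤ y ^ q := Real.rpow_nonneg hy.le q
      linarith

/-- Estimate at the kink point `0`. -/
lemma zero_case {q M γ : ℝ} (hq0 : 0 < q) (hq1 : q < 1) (hM : 0 < M)
    (hγ : 2 * M ^ (1 + 1 / (1 - q)) ≤ γ) (d y : ℝ) (hd : |d| ≤ M) :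
    d * y ≤ |y| ^ q + γ / 2 * y ^ 2 := by
  have h1q : 0 < 1 - q := by linarith
  have ht0 : 0 ≤ |y| := abs_nonneg y
  have hdy : d * y ≤ M * |y| := by
    calc d * y ≤ |d * y| := le_abs_self _
      _ = |d| * |y| := abs_mul d y
      _ ≤ M * |y| := mul_le_mul_of_nonneg_right hd ht0
  have hysq : y ^ 2 = |y| ^ 2 := (sq_abs y).symm
  rcases eq_or_lt_of_le ht0 with h0 | h0
  · -- y = 0
    have hy0 : y = 0 := abs_eq_zero.mp h0.symm
    simp [hy0, Real.zero_rpow hq0.ne']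
  have hMγ : 0 ≤ γ := le_trans (by positivity) hγ
  rcases le_or_gt (M * |y| ^ (1 - q)) 1 with hc | hc
  · -- small |y| : M|y| ≤ |y|^q
    have e : |y| ^ (1 - q) * |y| ^ q = |y| := by
      rw [← Real.rpow_add h0]; norm_num
    have hq : 0 < |y| ^ q := Real.rpow_pos_of_pos h0 q
    have : M * |y| ≤ |y| ^ q := by
      calc M * |y| = M * |y| ^ (1 - q) * |y| ^ q := by rw [mul_assoc, e]
        _ ≤ 1 * |y| ^ q := mul_le_mul_of_nonneg_right hc hq.le
        _ = |y| ^ q := one_mul _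
    nlinarith [mul_nonneg hMγ (sq_nonneg y)]
  · -- large |y| : quadratic term dominates
    have hα : 0 < 1 / (1 - q) := by positivity
    have hbase : 0 ≤ M * |y| ^ (1 - q) := by positivity
    have hr : (1 : ℝ) < (M * |y| ^ (1 - q)) ^ (1 / (1 - q)) := by
      have := Real.rpow_lt_rpow (by norm_num) hc hα
      rwa [Real.one_rpow] at this
    have hexp : (M * |y| ^ (1 - q)) ^ (1 / (1 - q)) = M ^ (1 / (1 - q)) * |y| := by
      rw [Real.mul_rpow hM.le (Real.rpow_nonneg ht0 _), ← Real.rpow_mul ht0,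
        mul_one_div, div_self h1q.ne', Real.rpow_one]
    rw [hexp] at hr
    have hMe : M ^ (1 + 1 / (1 - q)) = M * M ^ (1 / (1 - q)) := by
      rw [Real.rpow_add hM, Real.rpow_one]
    have hMα : 0 < M ^ (1 / (1 - q)) := Real.rpow_pos_of_pos hM _
    have hq : 0 ≤ |y| ^ q := Real.rpow_nonneg ht0 q
    -- γ/2 * y^2 ≥ M^(1+α) * |y|^2 = M * (M^α |y|) * |y| ≥ M |y|
    have key : M * |y| ≤ γ / 2 * y ^ 2 := by
      have t1 : M * |y| ≤ M * (M ^ (1 / (1 - q)) * |y|) * |y| := by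
        nlinarith [mul_pos hM h0]
      have t2 : M * (M ^ (1 / ( 1 - q)) * |y|) * |y| ≤ γ / 2 * (|y| * |y|) := by
        have : M * M ^ (1 / (1 - q)) ≤ γ / 2 := by rw [← hMe]; linarith
        nlinarith [mul_pos h0 h0]
      have t3 : |y| * |y| = y ^ 2 := by rw [hysq]; ring
      rw [t3] at t2
      linarith
    linarith

/-- From `q * a^(q-1) ≤ M` deduce the lower bound `a ≥ (M/q)^(1/(q-1))`. -/
lemma lower_bound {q M a : ℝ} (hq0 : 0 < q) (hq1 : q < 1) (hM : 0 < M) (ha : 0 < a)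
    (h : q * a ^ (q - 1) ≤ M) : (M / q) ^ ((1 : ℝ) / (q - 1)) ≤ a := by
  have hq1' : q - 1 < 0 := by linarith
  have hap : 0 < a ^ (q - 1) := Real.rpow_pos_of_pos ha _
  have h1 : a ^ (q - 1) ≤ M / q := by rw [le_div_iff₀ hq0]; linarith [h]
  have h2 : (M / q) ^ ((1 : ℝ) / (q - 1)) ≤ (a ^ (q - 1)) ^ ((1 : ℝ) / (q - 1)) :=
    Real.rpow_le_rpow_of_nonpos hap h1 (by
      apply div_nonpos_of_nonneg_of_nonpos <;> linarith)
  have h3 : (a ^ (q - 1)) ^ ((1 : ℝ) / (q - 1)) = a := by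
    rw [← Real.rpow_mul ha.le]
    rw [mul_one_div, div_self (by linarith : q - 1 ≠ 0), Real.rpow_one]
  rwa [h3] at h2

/-- For q ∈ (0,1), f(x) = |x|^q is restricted prox-regular: for every M > 0 and
bounded T ⊆ ℝ there is γ > 0 with f(y) + (γ/2)(x−y)² ≥ f(x) + d(y−x) whenever
x ∈ T \ S_M, y ∈ T, d ∈ ∂f(x), |d| ≤ M. -/
theorem stmt4 (q : ℝ) (hq0 : 0 < q) (hq1 : q < 1) :
    ∀ M > (0 : ℝ), ∀ T : Set ℝ, Bornology.IsBounded T →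
      ∃ γ > (0 : ℝ), ∀ x ∈ T \ exclSet q M, ∀ y ∈ T,
        ∀ d ∈ subgradAbsPow q x, |d| ≤ M →
          |y| ^ q + γ / 2 * (x - y) ^ 2 ≥ |x| ^ q + d * (y - x) := by
  intro M hM T _
  set r : ℝ := (M / q) ^ ((1 : ℝ) / (q - 1)) with hrdef
  have hr : 0 < r := Real.rpow_pos_of_pos (div_pos hM hq0) _
  have hr2 : 0 < r / 2 := by linarith
  set γ : ℝ := 3 * (r / 2) ^ (q - 2) + 2 * M ^ (1 + 1 / (1 - q)) with hγdef
  have hγ1 : 0 < (r / 2) ^ (q - 2) := Real.rpow_pos_of_pos hr2 _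
  have hγ2 : 0 < M ^ (1 + 1 / (1 - q)) := Real.rpow_pos_of_pos hM _
  have hγpos : 0 < γ := by rw [hγdef]; linarith
  refine ⟨γ, hγpos, ?_⟩
  rintro x ⟨hxT, -⟩ y hyT d hd hdM
  by_cases hx0 : x = 0
  · subst hx0
    have hγz : 2 * M ^ (1 + 1 / (1 - q)) ≤ γ := by rw [hγdef]; linarith
    have hz := zero_case hq0 hq1 hM hγz d y hdM
    have h0q : |(0 : ℝ)| ^ q = 0 := by
      rw [abs_zero, Real.zero_rpow hq0.ne']
    rw [h0q]
    have e1 : (0 - y) ^ 2 = y ^ 2 := by ring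
    have e2 : d * (y - 0) = d * y := by ring
    rw [e1, e2]
    linarith
  · -- x ≠ 0
    rw [subgradAbsPow, if_neg hx0, Set.mem_singleton_iff] at hd
    -- bound γ against the local constant
    have main : ∀ a : ℝ, 0 < a → r ≤ a →
        3 * (a / 2) ^ (q - 2) ≤ γ := by
      intro a ha hra
      have h1 : (a / 2) ^ (q - 2) ≤ (r / 2) ^ (q - 2) :=
        Real.rpow_le_rpow_of_nonpos hr2 (by linarith) (by linarith)
      rw [hγdef]; linarith
    rcases lt_trichotomy x 0 with hxneg | hxz | hxpos
    · -- x < 0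
      have ha : 0 < -x := by linarith
      have habs : |x| = -x := abs_of_neg hxneg
      have hsign : Real.sign x = -1 := Real.sign_of_neg hxneg
      have hdval : d = -(q * (-x) ^ (q - 1)) := by
        rw [hd, hsign, habs]; ring
      have hdnn : 0 ≤ q * (-x) ^ (q - 1) := by
        have := Real.rpow_pos_of_pos ha (q - 1); positivity
      have hqM : q * (-x) ^ (q - 1) ≤ M := by
        have : |d| = q * (-x) ^ (q - 1) := by
          rw [hdval, abs_neg, abs_of_nonneg hdnn]
        linarith [hdM, this.symm.le, this.le]
      have hxr : r ≤ -x := lower_bound hq0 hq1 hM ha hqM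
      have hkey := key_ineq hq0 hq1 ha (-y)
      have hγC := main (-x) ha hxr
      have e1 : |(-y)| = |y| := abs_neg y
      rw [e1] at hkey
      have e2 : (-x - -y) ^ 2 = (x - y) ^ 2 := by ring
      rw [e2] at hkey
      have e3 : q * (-x) ^ (q - 1) * (-y - -x) = d * (y - x) := by
        rw [hdval]; ring
      rw [e3] at hkey
      have e4 : |x| ^ q = (-x) ^ q := by rw [habs]
      rw [ge_iff_le, e4]
      nlinarith [sq_nonneg (x - y), hkey, hγC]
    · exact absurd hxz hx0
    · -- 0 < x
      have habs : |x| = x := abs_of_pos hxpos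
      have hsign : Real.sign x = 1 := Real.sign_of_pos hxpos
      have hdval : d = q * x ^ (q - 1) := by rw [hd, hsign, habs]; ring
      have hdnn : 0 ≤ q * x ^ (q - 1) := by
        have := Real.rpow_pos_of_pos hxpos (q - 1); positivity
      have hqM : q * x ^ (q - 1) ≤ M := by
        have : |d| = q * x ^ (q - 1) := by rw [hdval, abs_of_nonneg hdnn]
        linarith [this.le]
      have hxr : r ≤ x := lower_bound hq0 hq1 hM hxpos hqM
      have hkey := key_ineq hq0 hq1 hxpos y
      have hγC := main x hxpos hxr
      have e4 : |x| ^ q = x ^ q := by rw [habs]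
      rw [ge_iff_le, e4, ← hdval] at *
      rw [hdval] at hkey
      nlinarith [sq_nonneg (x - y), hkey, hγC]
end

section
/- Suppose h : ℝ^q → ℝ is differentiable with L_h-Lipschitz gradient, B ∈ ℝ^{m×q}, and H : Im(B) → ℝ^q satisfies H(By) well-defined with ‖H(u₁) − H(u₂)‖ ≤ M̄‖u₁ − u₂‖ and y^k = H(By^k) for all k. If Bᵀw^k = −∇h(y^k) for all k and w^{k+1} − w^k ∈ Im(B), then ‖w^{k+1} − w^k‖ ≤ L_h M̄ λ₊₊(BᵀB)^{−1/2} ‖By^{k+1} − By^k‖. -/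
/-!
Write `d = w^{k+1} - w^k = B u` and expand it in an orthonormal eigenbasis of `B Bᵀ`. If an
eigenvector `b` (eigenvalue `μ`) meets `d`, then `Bᵀ b ≠ 0` is an eigenvector of `Bᵀ B` for the
same eigenvalue `μ = ‖Bᵀ b‖² > 0`, so `μ ≥ λ₊₊`. Hence `λ₊₊ ‖d‖² ≤ ⟪B Bᵀ d, d⟫ = ‖Bᵀ d‖²`, and
`‖Bᵀ d‖ = ‖∇h(y^{k+1}) - ∇h(y^k)‖ ≤ L_h ‖y^{k+1} - y^k‖ ≤ L_h M̄ ‖B y^{k+1} - B y^k‖`.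
-/

open Module
open scoped InnerProductSpace

variable {F : Type*} [NormedAddCommGroup F] [InnerProductSpace ℝ F] [FiniteDimensional ℝ F]

theorem LinearMap.IsSymmetric.mul_norm_sq_le_inner_apply_self {T : F →ₗ[ℝ] F} (hT : T.IsSymmetric)
    {n : ℕ} (hn : finrank ℝ F = n) {lam : ℝ} {x : F}
    (hx : ∀ i, ⟪hT.eigenvectorBasis hn i, x⟫_ℝ ≠ 0 → lam ≤ hT.eigenvalues hn i) :
    lam * ‖x‖ ^ 2 ≤ ⟪T x, x⟫_ℝ := by
  have hTx : ⟪T x, x⟫_ℝ = ∑ i, hT.eigenvalues hn i * ⟪hT.eigenvectorBasis hn i, x⟫_ℝ ^ 2 := by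
    rw [← (hT.eigenvectorBasis hn).sum_inner_mul_inner]
    refine Finset.sum_congr rfl fun i _ => ?_
    rw [hT, hT.apply_eigenvectorBasis, real_inner_smul_right, real_inner_comm x]
    simp only [RCLike.ofReal_real_eq_id, id_eq]
    ring
  have hnorm : ‖x‖ ^ 2 = ∑ i, ⟪hT.eigenvectorBasis hn i, x⟫_ℝ ^ 2 := by
    rw [← real_inner_self_eq_norm_sq, ← (hT.eigenvectorBasis hn).sum_inner_mul_inner]
    simp only [real_inner_comm x, sq]
  rw [hTx, hnorm, Finset.mul_sum]
  refine Finset.sum_le_sum fun i _ => ?_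
  rcases eq_or_ne ⟪hT.eigenvectorBasis hn i, x⟫_ℝ 0 with h0 | h0
  · simp [h0]
  · exact mul_le_mul_of_nonneg_right (hx i h0) (sq_nonneg _)

variable {E : Type*} [NormedAddCommGroup E] [InnerProductSpace ℝ E] [CompleteSpace E]

namespace ContinuousLinearMap

theorem inner_apply_adjoint_self (B : E →L[ℝ] F) (x : F) :
    ⟪B (B.adjoint x), x⟫_ℝ = ‖B.adjoint x‖ ^ 2 := by
  rw [← adjoint_inner_right, real_inner_self_eq_norm_sq]

theorem mul_norm_sq_le_norm_adjoint_sq (B : E →L[ℝ] F) {lam : ℝ}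
    (hmin : ∀ μ : ℝ, 0 < μ → (∃ v, v ≠ 0 ∧ B.adjoint (B v) = μ • v) → lam ≤ μ)
    {d : F} (hd : d ∈ Set.range B) : lam * ‖d‖ ^ 2 ≤ ‖B.adjoint d‖ ^ 2 := by
  obtain ⟨u, rfl⟩ := hd
  have hT : (B ∘L B.adjoint).toLinearMap.IsSymmetric :=
    (isPositive_self_comp_adjoint B).isSymmetric
  rw [← inner_apply_adjoint_self]
  refine hT.mul_norm_sq_le_inner_apply_self rfl fun i hi => ?_
  set b := hT.eigenvectorBasis rfl i
  set μ := hT.eigenvalues rfl i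
  have hb : B (B.adjoint b) = μ • b := by
    have := hT.apply_eigenvectorBasis rfl i
    rwa [RCLike.ofReal_real_eq_id, id_eq] at this
  have hne : B.adjoint b ≠ 0 := by
    intro h0
    rw [← adjoint_inner_left, h0, inner_zero_left] at hi
    exact hi rfl
  have hμ : μ = ‖B.adjoint b‖ ^ 2 := by
    rw [← inner_apply_adjoint_self, hb, real_inner_smul_left, real_inner_self_eq_norm_sq,
      (hT.eigenvectorBasis rfl).orthonormal.1 i, one_pow, mul_one]
  refine hmin μ (hμ ▸ pow_pos (norm_pos_iff.2 hne) 2) ⟨B.adjoint b, hne, ?_⟩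
  rw [hb, map_smul]

theorem sqrt_mul_norm_le_norm_adjoint (B : E →L[ℝ] F) {lam : ℝ}
    (hmin : ∀ μ : ℝ, 0 < μ → (∃ v, v ≠ 0 ∧ B.adjoint (B v) = μ • v) → lam ≤ μ)
    {d : F} (hd : d ∈ Set.range B) : √lam * ‖d‖ ≤ ‖B.adjoint d‖ := by
  have := Real.sqrt_le_sqrt (B.mul_norm_sq_le_norm_adjoint_sq hmin hd)
  rwa [Real.sqrt_mul' _ (sq_nonneg _), Real.sqrt_sq (norm_nonneg _),
    Real.sqrt_sq (norm_nonneg _)] at this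

end ContinuousLinearMap

theorem stmt9_general (q m : ℕ)
    (g : EuclideanSpace ℝ (Fin q) → EuclideanSpace ℝ (Fin q))
    (Lh : ℝ)
    (hlip : ∀ y₁ y₂, ‖g y₁ - g y₂‖ ≤ Lh * ‖y₁ - y₂‖)
    (B : EuclideanSpace ℝ (Fin q) →L[ℝ] EuclideanSpace ℝ (Fin m))
    (lam : ℝ) (hpos : 0 < lam)
    (hmin : ∀ μ : ℝ, 0 < μ →
      (∃ v : EuclideanSpace ℝ (Fin q), v ≠ 0 ∧ B.adjoint (B v) = μ • v) → lam ≤ μ)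
    (H : EuclideanSpace ℝ (Fin m) → EuclideanSpace ℝ (Fin q)) (Mbar : ℝ)
    (hH : ∀ u₁ u₂, ‖H u₁ - H u₂‖ ≤ Mbar * ‖u₁ - u₂‖)
    (y : ℕ → EuclideanSpace ℝ (Fin q)) (w : ℕ → EuclideanSpace ℝ (Fin m))
    (hyH : ∀ k, y k = H (B (y k)))
    (hBw : ∀ k, B.adjoint (w k) = -(g (y k)))
    (hwim : ∀ k : ℕ, ∃ u, w (k + 1) - w k = B u)
    (k : ℕ) :
    ‖w (k + 1) - w k‖ ≤ Lh * Mbar * (Real.sqrt lam)⁻¹ * ‖B (y (k + 1)) - B (y k)‖ := by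
  obtain ⟨u, hu⟩ := hwim k
  have hw := B.sqrt_mul_norm_le_norm_adjoint hmin ⟨u, hu.symm⟩
  have hadj : ‖B.adjoint (w (k + 1) - w k)‖ = ‖g (y (k + 1)) - g (y k)‖ := by
    rw [map_sub, hBw, hBw, ← norm_neg]
    congr 1
    abel
  have hy : ‖y (k + 1) - y k‖ ≤ Mbar * ‖B (y (k + 1)) - B (y k)‖ := by
    have hfix : y (k + 1) - y k = H (B (y (k + 1))) - H (B (y k)) := by rw [← hyH, ← hyH]
    exact hfix ▸ hH _ _
  have hg : ‖g (y (k + 1)) - g (y k)‖ ≤ Lh * (Mbar * ‖B (y (k + 1)) - B (y k)‖) := by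
    rcases eq_or_ne (y (k + 1)) (y k) with heq | hne
    · simp [heq]
    · have hLh : 0 ≤ Lh := nonneg_of_mul_nonneg_left ((norm_nonneg _).trans (hlip _ _))
        (norm_pos_iff.2 (sub_ne_zero.2 hne))
      exact (hlip _ _).trans (mul_le_mul_of_nonneg_left hy hLh)
  have hsqrt : 0 < √lam := Real.sqrt_pos.2 hpos
  calc ‖w (k + 1) - w k‖ = (√lam)⁻¹ * (√lam * ‖w (k + 1) - w k‖) := by field_simp
    _ ≤ (√lam)⁻¹ * (Lh * (Mbar * ‖B (y (k + 1)) - B (y k)‖)) := by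
      gcongr (√lam)⁻¹ * ?_
      exact hw.trans (hadj ▸ hg)
    _ = Lh * Mbar * (√lam)⁻¹ * ‖B (y (k + 1)) - B (y k)‖ := by ring

/-- If ∇h is L_h-Lipschitz, y^k = H(By^k) with H M̄-Lipschitz, Bᵀw^k = −∇h(y^k),
and w^{k+1} − w^k ∈ Im(B), then
‖w^{k+1} − w^k‖ ≤ L_h M̄ λ₊₊(BᵀB)^{−1/2} ‖By^{k+1} − By^k‖. -/
theorem stmt9 (q m : ℕ)
    (h : EuclideanSpace ℝ (Fin q) → ℝ) (g : EuclideanSpace ℝ (Fin q) → EuclideanSpace ℝ (Fin q))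
    (Lh : ℝ)
    (hgrad : ∀ y, HasGradientAt h (g y) y)
    (hlip : ∀ y₁ y₂, ‖g y₁ - g y₂‖ ≤ Lh * ‖y₁ - y₂‖)
    (B : EuclideanSpace ℝ (Fin q) →L[ℝ] EuclideanSpace ℝ (Fin m))
    (lam : ℝ) (hpos : 0 < lam)
    (heig : ∃ v : EuclideanSpace ℝ (Fin q), v ≠ 0 ∧ B.adjoint (B v) = lam • v)
    (hmin : ∀ μ : ℝ, 0 < μ →
      (∃ v : EuclideanSpace ℝ (Fin q), v ≠ 0 ∧ B.adjoint (B v) = μ • v) → lam ≤ μ)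
    (H : EuclideanSpace ℝ (Fin m) → EuclideanSpace ℝ (Fin q)) (Mbar : ℝ)
    (hH : ∀ u₁ u₂, ‖H u₁ - H u₂‖ ≤ Mbar * ‖u₁ - u₂‖)
    (y : ℕ → EuclideanSpace ℝ (Fin q)) (w : ℕ → EuclideanSpace ℝ (Fin m))
    (hyH : ∀ k, y k = H (B (y k)))
    (hBw : ∀ k, B.adjoint (w k) = -(g (y k)))
    (hwim : ∀ k : ℕ, ∃ u, w (k + 1) - w k = B u)
    (k : ℕ) :
    ‖w (k + 1) - w k‖ ≤ Lh * Mbar * (Real.sqrt lam)⁻¹ * ‖B (y (k + 1)) - B (y k)‖ :=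
  stmt9_general q m g Lh hlip B lam hpos hmin H Mbar hH y w hyH hBw hwim k
end

section
/- Let h : ℝ^q → ℝ be differentiable with L_h-Lipschitz gradient, let B ∈ ℝ^{m×q}, and suppose y⁺, y^k satisfy ‖y⁺ − y^k‖ ≤ M̄‖By⁺ − By^k‖, Bᵀw⁺ = −∇h(y⁺), and w⁺ − w^k = β(Ax⁺ + By⁺) with ‖w⁺ − w^k‖ ≤ C‖By⁺ − By^k‖. If β > 2(L_h M̄² + 1 + C), then h(y^k) − h(y⁺) + ⟨w⁺, By^k − By⁺⟩ + (β/2)‖By⁺ − By^k‖² − (1/β)‖w⁺ − w^k‖² ≥ ‖By⁺ − By^k‖². -/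
/-!
The descent lemma bounds `h yᵏ` below by `h y⁺ + ⟨∇h(y⁺), yᵏ - y⁺⟩ - (L_h / 2)‖yᵏ - y⁺‖²`. Optimality `Bᵀw⁺ = -∇h(y⁺)` turns the linear term into
`-⟨w⁺, B yᵏ - B y⁺⟩`, which cancels against the inner product in the claim, and the two
quadratic error terms are controlled by `‖B y⁺ - B yᵏ‖²` through `M̄` and `C`. What remains is
the scalar inequality `β/2 - L_h M̄²/2 - C²/β ≥ 1`, guaranteed by the choice of `β`.
-/

open scoped RealInnerProductSpace

theorem add_fderiv_sub_sq_le_of_lipschitz {E : Type*} [NormedAddCommGroup E] [NormedSpace ℝ E]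
    {f : E → ℝ} {f' : E → E →L[ℝ] ℝ} {L : ℝ}
    (hf : ∀ x, HasFDerivAt f (f' x) x) (hlip : ∀ x y, ‖f' x - f' y‖ ≤ L * ‖x - y‖) (x y : E) :
    f x + f' x (y - x) - L / 2 * ‖y - x‖ ^ 2 ≤ f y := by
  set d := y - x
  -- The Lipschitz bound makes `φ` monotone on `[0, ∞)`; `φ 0 ≤ φ 1` is the claim.
  let φ : ℝ → ℝ := fun t ↦ f (x + t • d) - t * f' x d + L / 2 * t ^ 2 * ‖d‖ ^ 2
  have hφ : ∀ t, HasDerivAt φ (f' (x + t • d) d - f' x d + L * t * ‖d‖ ^ 2) t := by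
    intro t
    have hline : HasDerivAt (fun t : ℝ ↦ x + t • d) d t := by
      simpa using ((hasDerivAt_id t).smul_const d).const_add x
    have := (((hf _).comp_hasDerivAt t hline).sub ((hasDerivAt_id t).mul_const (f' x d))).add
      (((hasDerivAt_pow 2 t).const_mul (L / 2)).mul_const (‖d‖ ^ 2))
    exact this.congr_deriv (by push_cast; ring)
  have hφ_nonneg : ∀ t ∈ interior (Set.Ici (0 : ℝ)),
      0 ≤ f' (x + t • d) d - f' x d + L * t * ‖d‖ ^ 2 := by
    intro t ht
    rw [interior_Ici, Set.mem_Ioi] at ht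
    have hgap : ‖f' (x + t • d) - f' x‖ ≤ L * t * ‖d‖ := by
      simpa [norm_smul, abs_of_pos ht, mul_assoc] using hlip (x + t • d) x
    have hbound := (f' (x + t • d) - f' x).le_of_opNorm_le hgap d
    rw [sub_apply, Real.norm_eq_abs] at hbound
    linarith [(abs_le.mp hbound).1, show L * t * ‖d‖ ^ 2 = L * t * ‖d‖ * ‖d‖ by ring]
  have hmono := monotoneOn_of_hasDerivWithinAt_nonneg (convex_Ici 0)
    (fun t _ ↦ (hφ t).continuousAt.continuousWithinAt) (fun t _ ↦ (hφ t).hasDerivWithinAt)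
    hφ_nonneg
  have h01 := hmono Set.self_mem_Ici (Set.mem_Ici.mpr zero_le_one) zero_le_one
  simp only [φ, d, zero_smul, add_zero, one_smul, zero_mul, sub_zero, one_mul, one_pow,
    add_sub_cancel] at h01
  linarith

theorem add_inner_gradient_sub_sq_le_of_lipschitz {F : Type*} [NormedAddCommGroup F]
    [InnerProductSpace ℝ F] [CompleteSpace F] {f : F → ℝ} {g : F → F} {L : ℝ}
    (hf : ∀ x, HasGradientAt f (g x) x) (hlip : ∀ x y, ‖g x - g y‖ ≤ L * ‖x - y‖) (x y : F) :
    f x + ⟪g x, y - x⟫ - L / 2 * ‖y - x‖ ^ 2 ≤ f y :=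
  add_fderiv_sub_sq_le_of_lipschitz (fun x ↦ (hf x).hasFDerivAt)
    (fun x y ↦ by rw [← map_sub, LinearIsometryEquiv.norm_map]; exact hlip x y) x y

theorem sq_le_of_two_mul_add_one_add_lt {a C β : ℝ} (ha : 0 ≤ a) (hC : 0 ≤ C)
    (hβ : 2 * (a + 1 + C) < β) (s : ℝ) :
    s ^ 2 ≤ β / 2 * s ^ 2 - a / 2 * s ^ 2 - 1 / β * (C * s) ^ 2 := by
  have hβ0 : 0 < β := by linarith
  have hCβ : 1 / β * (C * s) ^ 2 ≤ C / 2 * s ^ 2 := by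
    rw [mul_pow, ← mul_assoc]
    refine mul_le_mul_of_nonneg_right ?_ (sq_nonneg s)
    rw [one_div_mul_eq_div, div_le_div_iff₀ hβ0 two_pos]
    nlinarith
  nlinarith [sq_nonneg s]

theorem stmt11_general {F G : Type*}
    [NormedAddCommGroup F] [InnerProductSpace ℝ F] [CompleteSpace F]
    [NormedAddCommGroup G] [InnerProductSpace ℝ G] [CompleteSpace G]
    (h : F → ℝ) (g : F → F) (Lh Mbar C β : ℝ)
    (hLh : 0 ≤ Lh) (hC : 0 ≤ C)
    (hgrad : ∀ y, HasGradientAt h (g y) y)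
    (hlip : ∀ y₁ y₂, ‖g y₁ - g y₂‖ ≤ Lh * ‖y₁ - y₂‖)
    (B : F →L[ℝ] G)
    (yp yk : F) (wp wk : G)
    (h1 : ‖yp - yk‖ ≤ Mbar * ‖B yp - B yk‖)
    (h2 : B.adjoint wp = -(g yp))
    (h4 : ‖wp - wk‖ ≤ C * ‖B yp - B yk‖)
    (hβ : 2 * (Lh * Mbar ^ 2 + 1 + C) < β) :
    h yk - h yp + ⟪wp, B yk - B yp⟫ + β / 2 * ‖B yp - B yk‖ ^ 2
      - (1 / β) * ‖wp - wk‖ ^ 2 ≥ ‖B yp - B yk‖ ^ 2 := by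
  set s := ‖B yp - B yk‖
  have hβ0 : 0 < β := by nlinarith [mul_nonneg hLh (sq_nonneg Mbar)]
  have hdescent := add_inner_gradient_sub_sq_le_of_lipschitz hgrad hlip yp yk
  have hopt : ⟪g yp, yk - yp⟫ = -⟪wp, B yk - B yp⟫ := by
    rw [← neg_neg (g yp), ← h2, inner_neg_left, ContinuousLinearMap.adjoint_inner_left, map_sub]
  have hy : Lh / 2 * ‖yk - yp‖ ^ 2 ≤ Lh * Mbar ^ 2 / 2 * s ^ 2 := by
    have := pow_le_pow_left₀ (norm_nonneg _) (norm_sub_rev yk yp ▸ h1) 2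
    nlinarith
  have hw : 1 / β * ‖wp - wk‖ ^ 2 ≤ 1 / β * (C * s) ^ 2 :=
    mul_le_mul_of_nonneg_left (pow_le_pow_left₀ (norm_nonneg _) h4 2) (by positivity)
  have hscalar := sq_le_of_two_mul_add_one_add_lt (mul_nonneg hLh (sq_nonneg Mbar)) hC hβ s
  linarith

/-- Descent of the augmented Lagrangian during the y and w updates of ADMM:
under Lipschitz gradient of h, the sub-minimization path bound, first-order
optimality Bᵀw⁺ = −∇h(y⁺), the w-update formula, and β > 2(L_h M̄² + 1 + C),
h(y^k) − h(y⁺) + ⟨w⁺, By^k − By⁺⟩ + (β/2)‖By⁺ − By^k‖² − (1/β)‖w⁺ − w^k‖²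
  ≥ ‖By⁺ − By^k‖². -/
theorem stmt11 {E F G : Type*}
    [NormedAddCommGroup E] [InnerProductSpace ℝ E]
    [NormedAddCommGroup F] [InnerProductSpace ℝ F] [CompleteSpace F]
    [NormedAddCommGroup G] [InnerProductSpace ℝ G] [CompleteSpace G]
    (h : F → ℝ) (g : F → F) (Lh Mbar C β : ℝ)
    (hLh : 0 ≤ Lh) (hC : 0 ≤ C)
    (hgrad : ∀ y, HasGradientAt h (g y) y)
    (hlip : ∀ y₁ y₂, ‖g y₁ - g y₂‖ ≤ Lh * ‖y₁ - y₂‖)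
    (A : E →L[ℝ] G) (B : F →L[ℝ] G)
    (xp : E) (yp yk : F) (wp wk : G)
    (h1 : ‖yp - yk‖ ≤ Mbar * ‖B yp - B yk‖)
    (h2 : B.adjoint wp = -(g yp))
    (h3 : wp - wk = β • (A xp + B yp))
    (h4 : ‖wp - wk‖ ≤ C * ‖B yp - B yk‖)
    (hβ : 2 * (Lh * Mbar ^ 2 + 1 + C) < β) :
    h yk - h yp + ⟪wp, B yk - B yp⟫ + β / 2 * ‖B yp - B yk‖ ^ 2
      - (1 / β) * ‖wp - wk‖ ^ 2 ≥ ‖B yp - B yk‖ ^ 2 :=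
  stmt11_general h g Lh Mbar C β hLh hC hgrad hlip B yp yk wp wk h1 h2 h4 hβ
end

section
/- For the problem min_{x,y∈ℝ} x(1+y) subject to x − y = 0, ADMM with alternating update orders (x then y in odd iterations, y then x in even iterations) and α = 1/β produces the non-convergent 2-periodic sequence (x^{2k+1}, y^{2k+1}, w^{2k+1}) = (2α(α−1), −α, α−1) and (x^{2k}, y^{2k}, w^{2k}) = (−α, 2α(α−1), −α), provided α ∉ {0, 1/2, (3±√5)/4}. -/
open Filter

lemma quadAux13 (a b m : ℝ) (ha : a ≠ 0)
    (h : ∀ u : ℝ, a * m ^ 2 + b * m ≤ a * u ^ 2 + b * u) : 2 * a * m + b = 0 := by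
  have h1 := h (m + 1)
  have h2 := h (m - 1)
  have hpos : 0 < a := by
    rcases lt_or_gt_of_ne ha with h' | h'
    · nlinarith
    · exact h'
  set d := 2 * a * m + b with hd
  have h3 := h (m - d / (2 * a))
  have hne : (2 * a) ≠ 0 := by positivity
  have hid : a * (m - d / (2 * a)) ^ 2 + b * (m - d / (2 * a))
      = a * m ^ 2 + b * m - d ^ 2 / (4 * a) := by
    field_simp
    ring
  rw [hid] at h3
  have hd2 : d ^ 2 ≤ 0 := by
    have h4 : d ^ 2 / (4 * a) ≤ 0 := by linarith
    have h5 := mul_le_mul_of_nonneg_right h4 (le_of_lt (by positivity : (0:ℝ) < 4 * a))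
    rwa [div_mul_cancel₀ _ (by positivity : (4*a:ℝ) ≠ 0), zero_mul] at h5
  have : d = 0 := by nlinarith [sq_nonneg d]
  exact this

/-- For min x(1+y) s.t. x − y = 0, ADMM with alternating primal update orders
(y-first on even iterations, x-first on odd iterations) and α = 1/β produces the
non-convergent 2-periodic sequence
(x^{2k+1},y^{2k+1},w^{2k+1}) = (2α(α−1), −α, α−1),
(x^{2k},y^{2k},w^{2k}) = (−α, 2α(α−1), −α), provided α ∉ {0, 1/2, (3±√5)/4}. -/
theorem stmt13 (α : ℝ)
    (hα0 : α ≠ 0) (hα1 : α ≠ 1 / 2)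
    (hα2 : α ≠ (3 + Real.sqrt 5) / 4) (hα3 : α ≠ (3 - Real.sqrt 5) / 4)
    (L : ℝ → ℝ → ℝ → ℝ)
    (hL : ∀ x y w, L x y w = x * (1 + y) + w * (x - y) + (α⁻¹ / 2) * (x - y) ^ 2)
    (x y w : ℕ → ℝ)
    (hx0 : x 0 = -α) (hy0 : y 0 = 2 * α * (α - 1)) (hw0 : w 0 = -α)
    (heven : ∀ k, Even k →
      (∀ u : ℝ, L (x k) (y (k + 1)) (w k) ≤ L (x k) u (w k)) ∧
      (∀ u : ℝ, L (x (k + 1)) (y (k + 1)) (w k) ≤ L u (y (k + 1)) (w k)))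
    (hodd : ∀ k, Odd k →
      (∀ u : ℝ, L (x (k + 1)) (y k) (w k) ≤ L u (y k) (w k)) ∧
      (∀ u : ℝ, L (x (k + 1)) (y (k + 1)) (w k) ≤ L (x (k + 1)) u (w k)))
    (hwup : ∀ k, w (k + 1) = w k + α⁻¹ * (x (k + 1) - y (k + 1))) :
    (∀ k : ℕ,
      (x (2 * k + 1) = 2 * α * (α - 1) ∧ y (2 * k + 1) = -α ∧ w (2 * k + 1) = α - 1) ∧
      (x (2 * k) = -α ∧ y (2 * k) = 2 * α * (α - 1) ∧ w (2 * k) = -α)) ∧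
    ¬∃ p : ℝ × ℝ × ℝ, Tendsto (fun k => (x k, y k, w k)) atTop (nhds p) := by
  have hainv : (α⁻¹ / 2 : ℝ) ≠ 0 := by
    simp [inv_ne_zero hα0]
  -- y-minimization formula
  have ymin : ∀ xv wv m : ℝ, (∀ u : ℝ, L xv m wv ≤ L xv u wv) →
      m = xv - α * (xv - wv) := by
    intro xv wv m hmin
    have key := quadAux13 (α⁻¹ / 2) (xv - wv - α⁻¹ * xv) m hainv ?_
    · have h5 : α⁻¹ * (m - xv) = -(xv - wv) := by linarith
      have h6 := congrArg (fun t => α * t) h5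
      simp only [← mul_assoc, mul_inv_cancel₀ hα0, one_mul] at h6
      linarith
    · intro u
      have h' := hmin u
      rw [hL, hL] at h'
      nlinarith [h']
  -- x-minimization formula
  have xmin : ∀ yv wv m : ℝ, (∀ u : ℝ, L m yv wv ≤ L u yv wv) →
      m = yv - α * (1 + yv + wv) := by
    intro yv wv m hmin
    have key := quadAux13 (α⁻¹ / 2) (1 + yv + wv - α⁻¹ * yv) m hainv ?_
    · have h5 : α⁻¹ * (m - yv) = -(1 + yv + wv) := by linarith
      have h6 := congrArg (fun t => α * t) h5
      simp only [← mul_assoc, mul_inv_cancel₀ hα0, one_mul] at h6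
      linarith
    · intro u
      have h' := hmin u
      rw [hL, hL] at h'
      nlinarith [h']
  -- step lemmas
  have stepE : ∀ k, Even k → x k = -α → y k = 2 * α * (α - 1) → w k = -α →
      x (k + 1) = 2 * α * (α - 1) ∧ y (k + 1) = -α ∧ w (k + 1) = α - 1 := by
    intro k hk hxk hyk hwk
    obtain ⟨hy1, hx1⟩ := heven k hk
    have hy : y (k + 1) = -α := by
      have := ymin (x k) (w k) (y (k + 1)) hy1
      rw [hxk, hwk] at this
      rw [this]; ring
    have hx : x (k + 1) = 2 * α * (α - 1) := by
      have := xmin (y (k + 1)) (w k) (x (k + 1)) hx1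
      rw [hy, hwk] at this
      rw [this]; ring
    refine ⟨hx, hy, ?_⟩
    rw [hwup k, hx, hy, hwk]
    field_simp
    ring
  have stepO : ∀ k, Odd k → x k = 2 * α * (α - 1) → y k = -α → w k = α - 1 →
      x (k + 1) = -α ∧ y (k + 1) = 2 * α * (α - 1) ∧ w (k + 1) = -α := by
    intro k hk hxk hyk hwk
    obtain ⟨hx1, hy1⟩ := hodd k hk
    have hx : x (k + 1) = -α := by
      have := xmin (y k) (w k) (x (k + 1)) hx1
      rw [hyk, hwk] at this
      rw [this]; ring
    have hy : y (k + 1) = 2 * α * (α - 1) := by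
      have := ymin (x (k + 1)) (w k) (y (k + 1)) hy1
      rw [hx, hwk] at this
      rw [this]; ring
    refine ⟨hx, hy, ?_⟩
    rw [hwup k, hx, hy, hwk]
    field_simp
    ring
  have key : ∀ k : ℕ,
      (x (2 * k) = -α ∧ y (2 * k) = 2 * α * (α - 1) ∧ w (2 * k) = -α) ∧
      (x (2 * k + 1) = 2 * α * (α - 1) ∧ y (2 * k + 1) = -α ∧ w (2 * k + 1) = α - 1) := by
    intro k
    induction k with
    | zero =>
      refine ⟨⟨hx0, hy0, hw0⟩, ?_⟩
      exact stepE 0 Even.zero hx0 hy0 hw0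
    | succ n ih =>
      obtain ⟨_, hxo, hyo, hwo⟩ := ih
      have h2 : x (2 * n + 2) = -α ∧ y (2 * n + 2) = 2 * α * (α - 1) ∧ w (2 * n + 2) = -α := by
        exact stepO (2 * n + 1) ⟨n, by ring⟩ hxo hyo hwo
      have heq : 2 * (n + 1) = 2 * n + 2 := by ring
      rw [heq]
      refine ⟨h2, ?_⟩
      exact stepE (2 * n + 2) ⟨n + 1, by ring⟩ h2.1 h2.2.1 h2.2.2
  constructor
  · intro k
    exact ⟨(key k).2, (key k).1⟩
  · rintro ⟨p, hp⟩
    have hm1 : StrictMono (fun k : ℕ => 2 * k) := by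
      intro a b h; dsimp only; omega
    have hm2 : StrictMono (fun k : ℕ => 2 * k + 1) := by
      intro a b h; dsimp only; omega
    have h1 : Tendsto (fun k : ℕ => (x (2 * k), y (2 * k), w (2 * k))) atTop (nhds p) :=
      hp.comp hm1.tendsto_atTop
    have h2 : Tendsto (fun k : ℕ => (x (2 * k + 1), y (2 * k + 1), w (2 * k + 1))) atTop
        (nhds p) := hp.comp hm2.tendsto_atTop
    have e1 : (fun k : ℕ => (x (2 * k), y (2 * k), w (2 * k)))
        = fun _ : ℕ => ((-α : ℝ), (2 * α * (α - 1) : ℝ), (-α : ℝ)) := by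
      funext k
      obtain ⟨hx', hy', hw'⟩ := (key k).1
      simp [hx', hy', hw']
    have e2 : (fun k : ℕ => (x (2 * k + 1), y (2 * k + 1), w (2 * k + 1)))
        = fun _ : ℕ => ((2 * α * (α - 1) : ℝ), (-α : ℝ), (α - 1 : ℝ)) := by
      funext k
      obtain ⟨hx', hy', hw'⟩ := (key k).2
      simp [hx', hy', hw']
    rw [e1] at h1
    rw [e2] at h2
    have hp1 := tendsto_nhds_unique h1 tendsto_const_nhds
    have hp2 := tendsto_nhds_unique h2 tendsto_const_nhds
    rw [hp1] at hp2
    have : (-α : ℝ) = 2 * α * (α - 1) := congrArg Prod.fst hp2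
    have h01 : α * (2 * α - 1) = 0 := by nlinarith
    rcases mul_eq_zero.mp h01 with h | h
    · exact hα0 h
    · exact hα1 (by linarith)
end

section
/- Let h : ℝ^q → ℝ be differentiable with L_h-Lipschitz gradient, H : Im(B) → ℝ^q be M̄-Lipschitz with h(y) ≥ h(H(By)) for all y. Then h(y) ≥ h(H(0)) − M̄‖∇h(H(0))‖·‖By‖ − (L_h M̄²/2)‖By‖², i.e., h is lower bounded by a quadratic function of By. Consequently, for β > L_h M̄², the function y ↦ h(y) + ⟨v, By⟩ + (β/2)‖By‖² is coercive in By for any fixed v. -/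
/-!
Along the segment from `x₀` to `x`, the Lipschitz gradient gives the one-sided descent
inequality `h x ≥ h x₀ + ⟪∇h x₀, x - x₀⟫ - (L_h / 2) ‖x - x₀‖²`. Applied with `x₀ = H 0`,
`x = H (B y)` and combined with `‖H (B y) - H 0‖ ≤ M̄ ‖B y‖` and `h y ≥ h (H (B y))`, this is the
quadratic lower bound. Adding `⟪v, B y⟫ + (β / 2) ‖B y‖²` leaves a quadratic in `‖B y‖` with
leading coefficient `(β - L_h M̄²) / 2 > 0`, which tends to infinity.
-/

open scoped RealInnerProductSpace
open Filter Set

section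
variable {F : Type*} [NormedAddCommGroup F] [InnerProductSpace ℝ F] [CompleteSpace F]
  {h : F → ℝ} {g : F → F} {L : ℝ}

theorem add_inner_sub_le_of_lipschitz_gradient (hgrad : ∀ y, HasGradientAt h (g y) y)
    (hlip : ∀ y₁ y₂, ‖g y₁ - g y₂‖ ≤ L * ‖y₁ - y₂‖) (x₀ x : F) :
    h x₀ + ⟪g x₀, x - x₀⟫ - L / 2 * ‖x - x₀‖ ^ 2 ≤ h x := by
  set d := x - x₀
  -- By Cauchy–Schwarz and the Lipschitz bound `φ' ≥ 0` on `t ≥ 0`, and `φ 0 ≤ φ 1` is the claim.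
  let φ : ℝ → ℝ := fun t => h (x₀ + t • d) - t * ⟪g x₀, d⟫ + L / 2 * ‖d‖ ^ 2 * t ^ 2
  let φ' : ℝ → ℝ := fun t => ⟪g (x₀ + t • d) - g x₀, d⟫ + L * ‖d‖ ^ 2 * t
  have hφ : ∀ t, HasDerivAt φ (φ' t) t := by
    intro t
    have hline : HasDerivAt (fun t : ℝ => x₀ + t • d) d t := by
      simpa using ((hasDerivAt_id t).smul_const d).const_add x₀
    have hcomp : HasDerivAt (fun t : ℝ => h (x₀ + t • d)) ⟪g (x₀ + t • d), d⟫ t := by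
      simpa [Function.comp_def] using (hgrad (x₀ + t • d)).hasFDerivAt.comp_hasDerivAt t hline
    refine ((hcomp.sub ((hasDerivAt_id t).mul_const ⟪g x₀, d⟫)).add
      ((hasDerivAt_pow 2 t).const_mul (L / 2 * ‖d‖ ^ 2))).congr_deriv ?_
    simp only [φ', inner_sub_left]
    ring
  have hφ'_nonneg : ∀ t ∈ interior (Ici (0 : ℝ)), 0 ≤ φ' t := by
    intro t ht
    rw [interior_Ici] at ht
    have hgap : ‖g (x₀ + t • d) - g x₀‖ ≤ L * t * ‖d‖ := by
      simpa [norm_smul, abs_of_pos (mem_Ioi.1 ht), mul_assoc] using hlip (x₀ + t • d) x₀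
    have hcs := neg_le_of_abs_le (abs_real_inner_le_norm (g (x₀ + t • d) - g x₀) d)
    nlinarith [mul_le_mul_of_nonneg_right hgap (norm_nonneg d)]
  have hmono : MonotoneOn φ (Ici 0) :=
    monotoneOn_of_hasDerivWithinAt_nonneg (convex_Ici 0)
      (fun t _ => (hφ t).continuousAt.continuousWithinAt)
      (fun t _ => (hφ t).hasDerivWithinAt) hφ'_nonneg
  have h01 : φ 0 ≤ φ 1 := hmono self_mem_Ici (by norm_num) zero_le_one
  simp only [φ, d, zero_smul, add_zero, zero_mul, sub_zero, ne_eq, OfNat.ofNat_ne_zero,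
    not_false_eq_true, zero_pow, mul_zero, one_smul, add_sub_cancel, one_mul, one_pow, mul_one] at h01
  linarith

theorem quadratic_lower_bound_comp {G : Type*} [SeminormedAddCommGroup G] {H : G → F} {M : ℝ}
    (hgrad : ∀ y, HasGradientAt h (g y) y) (hlip : ∀ y₁ y₂, ‖g y₁ - g y₂‖ ≤ L * ‖y₁ - y₂‖)
    (hL : 0 ≤ L) (hH : ∀ u₁ u₂, ‖H u₁ - H u₂‖ ≤ M * ‖u₁ - u₂‖) (u : G) :
    h (H 0) - M * ‖g (H 0)‖ * ‖u‖ - L * M ^ 2 / 2 * ‖u‖ ^ 2 ≤ h (H u) := by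
  have hdist : ‖H u - H 0‖ ≤ M * ‖u‖ := by simpa using hH u 0
  have hsq : ‖H u - H 0‖ ^ 2 ≤ (M * ‖u‖) ^ 2 := pow_le_pow_left₀ (norm_nonneg _) hdist 2
  have hcs := neg_le_of_abs_le (abs_real_inner_le_norm (g (H 0)) (H u - H 0))
  have hdescent := add_inner_sub_le_of_lipschitz_gradient hgrad hlip (H 0) (H u)
  nlinarith [mul_le_mul_of_nonneg_left hdist (norm_nonneg (g (H 0))),
    mul_le_mul_of_nonneg_left hsq hL]
end

theorem nonneg_of_norm_sub_le_mul {E E' : Type*} [NormedAddCommGroup E] [Nontrivial E]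
    [SeminormedAddCommGroup E'] {f : E → E'} {L : ℝ}
    (hf : ∀ y₁ y₂, ‖f y₁ - f y₂‖ ≤ L * ‖y₁ - y₂‖) : 0 ≤ L := by
  obtain ⟨y, hy⟩ := exists_ne (0 : E)
  have := hf y 0
  rw [sub_zero] at this
  exact nonneg_of_mul_nonneg_left ((norm_nonneg _).trans this) (norm_pos_iff.2 hy)

theorem exists_forall_le_quadratic_of_pos (a b : ℝ) {e : ℝ} (he : 0 < e) (C : ℝ) :
    ∃ R, ∀ r, R ≤ r → C ≤ a - b * r + e * r ^ 2 := by
  have : Tendsto (fun r : ℝ => a - b * r + e * r ^ 2) atTop atTop := by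
    have hlin : Tendsto (fun r : ℝ => e * r - b) atTop atTop :=
      tendsto_atTop_add_const_right _ (-b) (tendsto_id.const_mul_atTop he)
    refine tendsto_atTop_add_const_left _ a (tendsto_id.atTop_mul_atTop₀ hlin) |>.congr fun r => ?_
    simp only [id]
    ring
  exact eventually_atTop.1 (this.eventually_ge_atTop C)

/-- If ∇h is L_h-Lipschitz, H is M̄-Lipschitz and h(y) ≥ h(H(By)), then h is
lower bounded by a quadratic function of By:
h(y) ≥ h(H(0)) − M̄‖∇h(H(0))‖‖By‖ − (L_h M̄²/2)‖By‖²; consequently, for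
β > L_h M̄², the function y ↦ h(y) + ⟨v, By⟩ + (β/2)‖By‖² is coercive in By. -/
theorem stmt15 {F G : Type*}
    [NormedAddCommGroup F] [InnerProductSpace ℝ F] [CompleteSpace F]
    [NormedAddCommGroup G] [InnerProductSpace ℝ G]
    (h : F → ℝ) (g : F → F) (Lh Mbar : ℝ)
    (hgrad : ∀ y, HasGradientAt h (g y) y)
    (hlip : ∀ y₁ y₂, ‖g y₁ - g y₂‖ ≤ Lh * ‖y₁ - y₂‖)
    (B : F →L[ℝ] G) (H : G → F)
    (hH : ∀ u₁ u₂, ‖H u₁ - H u₂‖ ≤ Mbar * ‖u₁ - u₂‖)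
    (hmin : ∀ y, h y ≥ h (H (B y))) :
    (∀ y, h y ≥ h (H 0) - Mbar * ‖g (H 0)‖ * ‖B y‖ - Lh * Mbar ^ 2 / 2 * ‖B y‖ ^ 2)
    ∧ (∀ β : ℝ, Lh * Mbar ^ 2 < β → ∀ v : G, ∀ Cb : ℝ, ∃ R : ℝ, ∀ y,
        R ≤ ‖B y‖ → h y + ⟪v, B y⟫ + β / 2 * ‖B y‖ ^ 2 ≥ Cb) := by
  have hbound : ∀ y, h y ≥ h (H 0) - Mbar * ‖g (H 0)‖ * ‖B y‖
      - Lh * Mbar ^ 2 / 2 * ‖B y‖ ^ 2 := by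
    intro y
    -- `Lh < 0` is only possible when `F` is the zero space.
    rcases subsingleton_or_nontrivial F with hF | hF
    · obtain rfl : y = 0 := Subsingleton.elim y 0
      simpa using hmin 0
    · exact (hmin y).trans' <| quadratic_lower_bound_comp hgrad hlip
        (nonneg_of_norm_sub_le_mul hlip) hH (B y)
  refine ⟨hbound, fun β hβ v Cb => ?_⟩
  obtain ⟨R, hR⟩ := exists_forall_le_quadratic_of_pos (h (H 0)) (Mbar * ‖g (H 0)‖ + ‖v‖)
    (by linarith : 0 < (β - Lh * Mbar ^ 2) / 2) Cb
  refine ⟨R, fun y hy => ?_⟩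
  have hcs := neg_le_of_abs_le (abs_real_inner_le_norm v (B y))
  linarith [hR _ hy, hbound y]
end
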